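/- arXiv:1306.4776 — 6 statements merged into one kernel-verified Lean document; each statement's English description precedes it below -/
import Mathlib

section
/- Let H be a convex open subset of a Banach space X, let F, G : H → X be continuous with sup_{x∈H} ‖F(x) − G(x)‖ ≤ α, where G is Lipschitz on H with constant k > 0 and F is locally Lipschitz on H. For μ > 0 define φ(ξ) = μ·e^{ξk} + (α/k)(e^{ξk} − 1) for ξ ≥ 0. Let x₀ ∈ H, t₀ ∈ ℝ, and let u : (t₀−b, t₀+b) → H solve u' = G(u), u(t₀) = x₀, such that the closed ball of radius φ(|t−t₀|) around u(t) is contained in H for all t in the interval. Then for every x̃ ∈ H with ‖x̃ − x₀‖ ≤ μ there exists a unique solution v of v' = F(v) with v(t₀) = x̃ on (t₀−b, t₀+b) taking values in H, and moreover ‖u(t) − v(t)‖ ≤ φ(|t−t₀|) for all t in the interval. -/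
/-!
Uniqueness holds because `F` is locally Lipschitz: the set where two solutions agree is open
and closed in the interval. For existence, take the union of the domains of all solutions
through `(t₀, x̃)` inside the interval; they agree on overlaps, so together they form one
solution `v`. Grönwall's inequality keeps `v(t)` within `φ(|t - t₀|)` of `u(t)`. Since `F` is
within `α` of the Lipschitz map `G`, this bounds `v' = F(v)` near any endpoint `T` of the
domain that lies inside the interval. So `v(t)` converges as `t → T` to a point of
`closedBall (u T) (φ |T - t₀|) ⊆ H`. Near that point Picard–Lindelöf gives solutions with an
existence time that does not depend on the initial data, and these continue `v` past `T`.
Hence the maximal domain is the whole interval.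
-/

open Set Metric

open Filter Topology
open scoped NNReal

theorem UniformContinuousOn.cauchy_map {α β : Type*} [UniformSpace α] [UniformSpace β]
    {f : α → β} {s : Set α} {l : Filter α} (hf : UniformContinuousOn f s) (hl : Cauchy l)
    (hls : l ≤ 𝓟 s) : Cauchy (map f l) := by
  refine ⟨hl.1.map f, ?_⟩
  rw [prod_map_map_eq]
  exact hf.mono_left (le_inf hl.2 (prod_principal_principal (s := s) (t := s) ▸ prod_mono hls hls))

theorem Convex.exists_tendsto_nhdsWithin_of_nnnorm_hasDerivWithinAt_le {E : Type*}
    [NormedAddCommGroup E] [NormedSpace ℝ E] [CompleteSpace E] {f f' : ℝ → E} {S : Set ℝ}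
    {C : ℝ≥0} (hS : Convex ℝ S) (hf : ∀ t ∈ S, HasDerivWithinAt f (f' t) S t)
    (hC : ∀ t ∈ S, ‖f' t‖₊ ≤ C) {T : ℝ} (hT : T ∈ closure S) :
    ∃ y, Tendsto f (𝓝[S] T) (𝓝 y) := by
  have := mem_closure_iff_nhdsWithin_neBot.1 hT
  exact cauchy_map_iff_exists_tendsto.1
    ((hS.lipschitzOnWith_of_nnnorm_hasDerivWithin_le hf hC).uniformContinuousOn.cauchy_map
      (cauchy_nhds.mono nhdsWithin_le_nhds) (le_principal_iff.2 self_mem_nhdsWithin))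

theorem IsPreconnected.inter_of_real {s t : Set ℝ} (hs : IsPreconnected s)
    (ht : IsPreconnected t) : IsPreconnected (s ∩ t) := by
  rw [isPreconnected_iff_ordConnected] at *
  exact hs.inter ht

theorem continuous_gronwallBound (δ K ε : ℝ) : Continuous (gronwallBound δ K ε) :=
  continuous_iff_continuousAt.2 fun x ↦ (hasDerivAt_gronwallBound δ K ε x).continuousAt

theorem IsPicardLindelof.exists_eq_forall_mem_Icc_hasDerivWithinAt_mem_closedBall
    {E : Type*} [NormedAddCommGroup E] [NormedSpace ℝ E] [CompleteSpace E]
    {f : ℝ → E → E} {tmin tmax : ℝ} {t₀ : Icc tmin tmax} {x₀ x : E} {a r L K : ℝ≥0}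
    (hf : IsPicardLindelof f t₀ x₀ a r L K) (hx : x ∈ closedBall x₀ r) :
    ∃ γ : ℝ → E, γ t₀ = x ∧ ∀ t ∈ Icc tmin tmax,
      HasDerivWithinAt γ (f t (γ t)) (Icc tmin tmax) t ∧ γ t ∈ closedBall x₀ a := by
  obtain ⟨γ, hγ⟩ := ODE.FunSpace.exists_isFixedPt_next hf hx
  have hmem (t : ℝ) := γ.compProj_mem_closedBall hf.mul_max_le (t := t)
  refine ⟨γ.compProj, by rw [ODE.FunSpace.compProj_val, ← hγ, ODE.FunSpace.next_apply₀],
    fun t ht ↦ ⟨?_, hmem t⟩⟩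
  refine (ODE.hasDerivWithinAt_picard_Icc t₀.2 hf.continuousOn_uncurry
    γ.continuous_compProj.continuousOn (fun t _ ↦ hmem t) x ht).congr_of_mem (fun t' ht' ↦ ?_) ht
  nth_rw 1 [← hγ]
  rw [ODE.FunSpace.compProj_of_mem ht', ODE.FunSpace.next_apply]

theorem norm_le_of_lipschitzOnWith_of_norm_sub_le {X : Type*} [NormedAddCommGroup X]
    {F G : X → X} {H : Set X} {K : ℝ≥0} {α : ℝ}
    (hG : LipschitzOnWith K G H) (hFG : ∀ x ∈ H, ‖F x - G x‖ ≤ α) {x y : X} (hx : x ∈ H)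
    (hy : y ∈ H) : ‖F y‖ ≤ α + K * ‖x - y‖ + ‖G x‖ := by
  calc ‖F y‖ = ‖(F y - G y) + (G y - G x) + G x‖ := by rw [sub_add_sub_cancel, sub_add_cancel]
    _ ≤ ‖F y - G y‖ + ‖G y - G x‖ + ‖G x‖ := norm_add₃_le
    _ ≤ α + K * ‖x - y‖ + ‖G x‖ := by
      gcongr
      · exact hFG y hy
      · rw [← dist_eq_norm, ← dist_eq_norm, dist_comm x]
        exact hG.dist_le_mul y hy x hx

section

variable {X : Type*} [NormedAddCommGroup X] [NormedSpace ℝ X]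

def IsSolutionIn (F : X → X) (H : Set X) (f : ℝ → X) (J : Set ℝ) : Prop :=
  ∀ t ∈ J, f t ∈ H ∧ HasDerivAt f (F (f t)) t

namespace IsSolutionIn

variable {F G : X → X} {H : Set X} {f g u v : ℝ → X} {J U V : Set ℝ}

theorem mono (hf : IsSolutionIn F H f J) (hUJ : U ⊆ J) : IsSolutionIn F H f U :=
  fun t ht ↦ hf t (hUJ ht)

theorem continuousOn (hf : IsSolutionIn F H f J) : ContinuousOn f J :=
  fun t ht ↦ (hf t ht).2.continuousAt.continuousWithinAt

theorem congr (hf : IsSolutionIn F H f J) (hJ : IsOpen J) (hfg : EqOn f g J) :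
    IsSolutionIn F H g J := by
  intro t ht
  rw [← hfg ht]
  refine ⟨(hf t ht).1, (hf t ht).2.congr_of_eventuallyEq ?_⟩
  exact mem_of_superset (hJ.mem_nhds ht) fun s hs ↦ (hfg hs).symm

theorem exists_union (hf : IsSolutionIn F H f U) (hg : IsSolutionIn F H g V) (hU : IsOpen U)
    (hV : IsOpen V) (hfg : EqOn f g (U ∩ V)) :
    ∃ w, IsSolutionIn F H w (U ∪ V) ∧ EqOn w f U := by
  classical
  have hwf : EqOn (U.piecewise f g) f U := fun t ht ↦ piecewise_eq_of_mem _ _ _ ht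
  have hwg : EqOn (U.piecewise f g) g V := fun t ht ↦ by
    by_cases htU : t ∈ U
    · rw [piecewise_eq_of_mem _ _ _ htU, hfg ⟨htU, ht⟩]
    · exact piecewise_eq_of_notMem _ _ _ htU
  refine ⟨U.piecewise f g, fun t ht ↦ ?_, hwf⟩
  rcases ht with htU | htV
  · exact hf.congr hU hwf.symm t htU
  · exact hg.congr hV hwg.symm t htV

theorem comp_neg (hf : IsSolutionIn F H f J) :
    IsSolutionIn (fun x ↦ -F x) H (fun s ↦ f (-s)) {s | -s ∈ J} := fun s hs ↦
  ⟨(hf (-s) hs).1, by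
    simpa [Function.comp_def] using (hf (-s) hs).2.scomp s (hasDerivAt_neg s)⟩

theorem eventuallyEq (hH : IsOpen H) (hF : LocallyLipschitzOn H F) (hf : IsSolutionIn F H f J)
    (hg : IsSolutionIn F H g J) {t : ℝ} (hJ : J ∈ 𝓝 t) (hfg : f t = g t) : f =ᶠ[𝓝 t] g := by
  have hfH := (hf t (mem_of_mem_nhds hJ)).1
  obtain ⟨K, s, hs, hlip⟩ := hF hfH
  rw [hH.nhdsWithin_eq hfH] at hs
  have hmem {h : ℝ → X} (hh : IsSolutionIn F H h J) (hht : h t = f t) :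
      ∀ᶠ τ in 𝓝 t, HasDerivAt h (F (h τ)) τ ∧ h τ ∈ s := by
    have hcont := (hh t (mem_of_mem_nhds hJ)).2.continuousAt
    rw [ContinuousAt, hht] at hcont
    filter_upwards [hJ, hcont hs] with τ hτ hτs using ⟨(hh τ hτ).2, hτs⟩
  exact ODE_solution_unique_of_eventually (v := fun _ ↦ F) (s := fun _ ↦ s)
    (Eventually.of_forall fun _ ↦ hlip) (hmem hf rfl) (hmem hg hfg.symm) hfg

theorem eqOn (hH : IsOpen H) (hF : LocallyLipschitzOn H F) (hf : IsSolutionIn F H f J)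
    (hg : IsSolutionIn F H g J) (hJ : IsOpen J) (hJc : IsPreconnected J) {t₀ : ℝ}
    (ht₀ : t₀ ∈ J) (hfg : f t₀ = g t₀) : EqOn f g J := by
  intro t ht
  refine (hJc.induction₂ (fun a b ↦ (f a = g a ↔ f b = g b)) (fun a ha ↦ ?_)
    (fun _ _ _ _ _ _ h₁ h₂ ↦ h₁.trans h₂) (fun _ _ _ _ h ↦ h.symm) ht₀ ht).1 hfg
  apply eventually_nhdsWithin_of_eventually_nhds
  by_cases hfga : f a = g a
  · filter_upwards [hf.eventuallyEq hH hF hg (hJ.mem_nhds ha) hfga] with b hb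
    exact iff_of_true hfga hb
  · filter_upwards [((hf a ha).2.continuousAt.sub (hg a ha).2.continuousAt).eventually_ne
      (sub_ne_zero.2 hfga)] with b hb
    exact iff_of_false hfga (sub_ne_zero.1 hb)

variable {K : ℝ≥0} {α δ : ℝ}

theorem norm_sub_le_gronwallBound_of_le (hG : LipschitzOnWith K G H)
    (hFG : ∀ x ∈ H, ‖F x - G x‖ ≤ α) {a b : ℝ} (hab : a ≤ b) (hu : IsSolutionIn G H u (Icc a b))
    (hv : IsSolutionIn F H v (Icc a b)) (hδ : ‖u a - v a‖ ≤ δ) :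
    ‖u b - v b‖ ≤ gronwallBound δ K α (b - a) := by
  have := dist_le_of_approx_trajectories_ODE_of_mem (v := fun _ ↦ G) (s := fun _ ↦ H) (εf := 0)
    (fun _ _ ↦ hG) hu.continuousOn (fun t ht ↦ (hu t (Ico_subset_Icc_self ht)).2.hasDerivWithinAt)
    (fun t _ ↦ (dist_self _).le) (fun t ht ↦ (hu t (Ico_subset_Icc_self ht)).1) hv.continuousOn
    (fun t ht ↦ (hv t (Ico_subset_Icc_self ht)).2.hasDerivWithinAt)
    (fun t ht ↦ (dist_eq_norm _ _).trans_le (hFG _ (hv t (Ico_subset_Icc_self ht)).1))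
    (fun t ht ↦ (hv t (Ico_subset_Icc_self ht)).1) ((dist_eq_norm _ _).trans_le hδ) b
    (right_mem_Icc.2 hab)
  rwa [zero_add, dist_eq_norm] at this

theorem norm_sub_le_gronwallBound (hG : LipschitzOnWith K G H)
    (hFG : ∀ x ∈ H, ‖F x - G x‖ ≤ α) (hJ : J.OrdConnected) (hu : IsSolutionIn G H u J)
    (hv : IsSolutionIn F H v J) {t₀ t : ℝ} (ht₀ : t₀ ∈ J) (ht : t ∈ J)
    (hδ : ‖u t₀ - v t₀‖ ≤ δ) : ‖u t - v t‖ ≤ gronwallBound δ K α |t - t₀| := by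
  rcases le_total t₀ t with h | h
  · rw [abs_of_nonneg (sub_nonneg.2 h)]
    exact norm_sub_le_gronwallBound_of_le hG hFG h (hu.mono (hJ.out ht₀ ht))
      (hv.mono (hJ.out ht₀ ht)) hδ
  · have hsub : Icc (-t₀) (-t) ⊆ {s | -s ∈ J} := fun s hs ↦
      hJ.out ht ht₀ ⟨le_neg.1 hs.2, neg_le.1 hs.1⟩
    have hG' : LipschitzOnWith K (fun x ↦ -G x) H :=
      LipschitzOnWith.of_dist_le_mul fun x hx y hy ↦ by
        rw [dist_neg_neg]; exact hG.dist_le_mul x hx y hy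
    have := norm_sub_le_gronwallBound_of_le hG'
      (fun x hx ↦ by rw [neg_sub_neg, norm_sub_rev]; exact hFG x hx)
      (neg_le_neg h) (hu.comp_neg.mono hsub) (hv.comp_neg.mono hsub) (by simpa using hδ)
    simp only [neg_neg] at this
    rwa [abs_of_nonpos (sub_nonpos.2 h), neg_sub, ← neg_sub_neg t t₀]

theorem exists_tendsto_nhdsWithin_of_norm_sub_le [CompleteSpace X] (hG : LipschitzOnWith K G H)
    (hFG : ∀ x ∈ H, ‖F x - G x‖ ≤ α) {I : Set ℝ} (hI : IsOpen I) (hu : IsSolutionIn G H u I)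
    {ρ : ℝ → ℝ} (hρ : ContinuousOn ρ I) (hball : ∀ t ∈ I, closedBall (u t) (ρ t) ⊆ H)
    (hJ : IsPreconnected J) (hJI : J ⊆ I) (hv : IsSolutionIn F H v J)
    (hvu : ∀ t ∈ J, ‖u t - v t‖ ≤ ρ t) {T : ℝ} (hT : T ∈ I) (hTJ : T ∈ closure J) :
    ∃ y ∈ H, Tendsto v (𝓝[J] T) (𝓝 y) := by
  obtain ⟨ε, hε, hεI⟩ := nhds_basis_closedBall.mem_iff.1 (hI.mem_nhds hT)
  have hcont : ContinuousOn (fun t ↦ α + K * ρ t + ‖G (u t)‖) (closedBall T ε) :=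
    ((continuousOn_const.add (continuousOn_const.mul hρ)).add
      (hG.continuousOn.comp hu.continuousOn fun t ht ↦ (hu t ht).1).norm).mono hεI
  obtain ⟨M, hM⟩ := (isCompact_closedBall T ε).exists_bound_of_continuousOn hcont
  set S := J ∩ ball T ε
  have hbound : ∀ t ∈ S, ‖F (v t)‖₊ ≤ M.toNNReal := by
    rintro t ⟨htJ, htT⟩
    rw [← NNReal.coe_le_coe, coe_nnnorm, Real.coe_toNNReal']
    refine le_max_of_le_left ?_
    have huH := (hu t (hεI (ball_subset_closedBall htT))).1
    calc ‖F (v t)‖ ≤ α + K * ‖u t - v t‖ + ‖G (u t)‖ :=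
          norm_le_of_lipschitzOnWith_of_norm_sub_le hG hFG huH (hv t htJ).1
      _ ≤ α + K * ρ t + ‖G (u t)‖ := by gcongr; exact hvu t htJ
      _ ≤ M := (le_abs_self _).trans (hM t (ball_subset_closedBall htT))
  have hTS : 𝓝[S] T = 𝓝[J] T := nhdsWithin_inter_of_mem' (nhdsWithin_le_nhds (ball_mem_nhds T hε))
  have hne := mem_closure_iff_nhdsWithin_neBot.1 hTJ
  have hTS' : T ∈ closure S := by
    rw [mem_closure_iff_nhdsWithin_neBot, hTS]
    exact hne
  obtain ⟨y, hy⟩ :=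
    (hJ.convex.inter (convex_ball T ε)).exists_tendsto_nhdsWithin_of_nnnorm_hasDerivWithinAt_le
      (fun t ht ↦ (hv t ht.1).2.hasDerivWithinAt) hbound hTS'
  rw [hTS] at hy
  have hlim : Tendsto (fun t ↦ ‖u t - v t‖) (𝓝[J] T) (𝓝 ‖u T - y‖) :=
    (((hu T hT).2.continuousAt.tendsto.mono_left nhdsWithin_le_nhds).sub hy).norm
  refine ⟨y, hball T hT ?_, hy⟩
  rw [mem_closedBall, dist_comm, dist_eq_norm]
  exact le_of_tendsto_of_tendsto hlim ((hρ T hT).mono_left (nhdsWithin_mono _ hJI))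
    (eventually_mem_nhdsWithin.mono hvu)

end IsSolutionIn

structure IsIVPSolution (F : X → X) (H : Set X) (t₀ : ℝ) (x : X) (J : Set ℝ) (f : ℝ → X) :
    Prop where
  isOpen : IsOpen J
  isPreconnected : IsPreconnected J
  mem : t₀ ∈ J
  isSolutionIn : IsSolutionIn F H f J
  apply_eq : f t₀ = x

variable {F : X → X} {H : Set X} {t₀ : ℝ} {x : X} {I J J' : Set ℝ} {f g : ℝ → X}

theorem IsIVPSolution.eqOn (hH : IsOpen H) (hF : LocallyLipschitzOn H F)
    (hf : IsIVPSolution F H t₀ x J f) (hg : IsIVPSolution F H t₀ x J' g) : EqOn f g (J ∩ J') :=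
  (hf.isSolutionIn.mono inter_subset_left).eqOn hH hF (hg.isSolutionIn.mono inter_subset_right)
    (hf.isOpen.inter hg.isOpen) (hf.isPreconnected.inter_of_real hg.isPreconnected)
    ⟨hf.mem, hg.mem⟩ (hf.apply_eq.trans hg.apply_eq.symm)

variable [CompleteSpace X]

theorem exists_forall_mem_closedBall_exists_isSolutionIn_Ioo (hH : IsOpen H)
    (hF : LocallyLipschitzOn H F) {y : X} (hy : y ∈ H) :
    ∃ r > (0 : ℝ), ∃ ε > (0 : ℝ), ∀ x ∈ closedBall y r, ∀ s : ℝ,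
      ∃ f : ℝ → X, f s = x ∧ IsSolutionIn F H f (Ioo (s - ε) (s + ε)) := by
  obtain ⟨K, U, hU, hlip⟩ := hF hy
  rw [hH.nhdsWithin_eq hy] at hU
  obtain ⟨a, ha, haU⟩ := nhds_basis_closedBall.mem_iff.1 (inter_mem hU (hH.mem_nhds hy))
  have hlip' : LipschitzOnWith K F (closedBall y a) := hlip.mono fun z hz ↦ (haU hz).1
  set L := ‖F y‖ + K * a
  have hL : 0 ≤ L := by positivity
  have hbound : ∀ z ∈ closedBall y a, ‖F z‖ ≤ L := fun z hz ↦ by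
    calc ‖F z‖ ≤ ‖F y‖ + dist (F z) (F y) := by rw [dist_eq_norm]; exact norm_le_insert' _ _
      _ ≤ ‖F y‖ + K * dist z y := by
        gcongr; exact hlip'.dist_le_mul z hz y (mem_closedBall_self ha.le)
      _ ≤ ‖F y‖ + K * a := by gcongr; exact mem_closedBall.1 hz
  set ε := a / (2 * (L + 1))
  have hε : 0 < ε := by positivity
  refine ⟨a / 2, by positivity, ε, hε, fun x hx s ↦ ?_⟩
  have hpl : IsPicardLindelof (fun _ ↦ F) (tmin := s - ε) (tmax := s + ε)
      ⟨s, by constructor <;> linarith⟩ y ⟨a, ha.le⟩ ⟨a / 2, by positivity⟩ ⟨L, hL⟩ K := by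
    refine IsPicardLindelof.of_time_independent hbound hlip' ?_
    simp only [add_sub_cancel_left, sub_sub_cancel, max_self]
    calc L * ε ≤ (L + 1) * ε := by gcongr; linarith
      _ = a - a / 2 := by simp only [ε]; field_simp; ring
  obtain ⟨f, hfs, hf⟩ := hpl.exists_eq_forall_mem_Icc_hasDerivWithinAt_mem_closedBall hx
  refine ⟨f, hfs, fun t ht ↦ ⟨(haU (hf t (Ioo_subset_Icc_self ht)).2).2, ?_⟩⟩
  exact (hf t (Ioo_subset_Icc_self ht)).1.hasDerivAt (Icc_mem_nhds ht.1 ht.2)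

theorem exists_isIVPSolution_subset (hH : IsOpen H) (hF : LocallyLipschitzOn H F)
    (hI : IsOpen I) (hIc : IsPreconnected I) (ht₀ : t₀ ∈ I) (hx : x ∈ H) :
    ∃ J f, IsIVPSolution F H t₀ x J f ∧ J ⊆ I := by
  obtain ⟨r, hr, ε, hε, hloc⟩ := exists_forall_mem_closedBall_exists_isSolutionIn_Ioo hH hF hx
  obtain ⟨f, hft₀, hf⟩ := hloc x (mem_closedBall_self hr.le) t₀
  exact ⟨_, f, ⟨isOpen_Ioo.inter hI, isPreconnected_Ioo.inter_of_real hIc,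
    ⟨⟨by linarith, by linarith⟩, ht₀⟩, hf.mono inter_subset_left, hft₀⟩, inter_subset_right⟩

theorem IsIVPSolution.exists_mem_of_tendsto (hH : IsOpen H) (hF : LocallyLipschitzOn H F)
    (hf : IsIVPSolution F H t₀ x J f) (hI : IsOpen I) (hIc : IsPreconnected I) (hJI : J ⊆ I)
    {T : ℝ} (hT : T ∈ I) (hTJ : T ∈ closure J) {y : X} (hy : y ∈ H)
    (hlim : Tendsto f (𝓝[J] T) (𝓝 y)) :
    ∃ J' g, IsIVPSolution F H t₀ x J' g ∧ J' ⊆ I ∧ T ∈ J' := by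
  obtain ⟨r, hr, ε, hε, hloc⟩ := exists_forall_mem_closedBall_exists_isSolutionIn_Ioo hH hF hy
  have := mem_closure_iff_nhdsWithin_neBot.1 hTJ
  -- restart from a time `s` close to `T` where `f s` is close to `y`
  obtain ⟨s, ⟨hfs, hsT⟩, hsJ⟩ := ((hlim.eventually (closedBall_mem_nhds y hr)).and
    (nhdsWithin_le_nhds (Ioo_mem_nhds (sub_lt_self T hε) (lt_add_of_pos_right T hε))) |>.and
    self_mem_nhdsWithin).exists
  obtain ⟨g, hgs, hg⟩ := hloc (f s) hfs s
  set V := Ioo (s - ε) (s + ε) ∩ I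
  have hV : IsIVPSolution F H s (f s) V g :=
    ⟨isOpen_Ioo.inter hI, isPreconnected_Ioo.inter_of_real hIc,
      ⟨⟨by linarith, by linarith⟩, hJI hsJ⟩, hg.mono inter_subset_left, hgs⟩
  have hfs' : IsIVPSolution F H s (f s) J f := { hf with mem := hsJ, apply_eq := rfl }
  obtain ⟨w, hw, hwf⟩ := hf.isSolutionIn.exists_union hV.isSolutionIn hf.isOpen hV.isOpen
    (hfs'.eqOn hH hF hV)
  refine ⟨J ∪ V, w, ⟨hf.isOpen.union hV.isOpen,
    hf.isPreconnected.union s hsJ hV.mem hV.isPreconnected, Or.inl hf.mem, hw,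
    (hwf hf.mem).trans hf.apply_eq⟩, union_subset hJI inter_subset_right,
    Or.inr ⟨⟨by linarith [hsT.2], by linarith [hsT.1]⟩, hT⟩⟩

theorem exists_maximal_isIVPSolution (hH : IsOpen H) (hF : LocallyLipschitzOn H F)
    (hI : IsOpen I) (hIc : IsPreconnected I) (ht₀ : t₀ ∈ I) (hx : x ∈ H) :
    ∃ R v, IsIVPSolution F H t₀ x R v ∧ R ⊆ I ∧
      ∀ J f, IsIVPSolution F H t₀ x J f → J ⊆ I → J ⊆ R := by
  set S := {J | J ⊆ I ∧ ∃ f, IsIVPSolution F H t₀ x J f}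
  have hR : ∀ t ∈ ⋃₀ S, ∃ J f, IsIVPSolution F H t₀ x J f ∧ J ⊆ I ∧ t ∈ J := by
    rintro t ⟨J, ⟨hJI, f, hf⟩, ht⟩
    exact ⟨J, f, hf, hJI, ht⟩
  choose! Jt ft hft hJtI htJt using hR
  have hagree : ∀ J f, IsIVPSolution F H t₀ x J f → J ⊆ I → EqOn (fun t ↦ ft t t) f J :=
    fun J f hf hJI t ht ↦
      have htS : t ∈ ⋃₀ S := ⟨J, ⟨hJI, f, hf⟩, ht⟩
      (hft t htS).eqOn hH hF hf ⟨htJt t htS, ht⟩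
  obtain ⟨J₀, f₀, hf₀, hJ₀I⟩ := exists_isIVPSolution_subset hH hF hI hIc ht₀ hx
  refine ⟨⋃₀ S, fun t ↦ ft t t, ⟨isOpen_sUnion fun J ⟨_, f, hf⟩ ↦ hf.isOpen,
    isPreconnected_sUnion t₀ _ (fun J ⟨_, f, hf⟩ ↦ hf.mem) fun J ⟨_, f, hf⟩ ↦ hf.isPreconnected,
    ⟨J₀, ⟨hJ₀I, f₀, hf₀⟩, hf₀.mem⟩, fun t ht ↦ ?_,
    (hagree J₀ f₀ hf₀ hJ₀I hf₀.mem).trans hf₀.apply_eq⟩,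
    sUnion_subset fun J hJ ↦ hJ.1, fun J f hf hJI ↦ subset_sUnion_of_mem ⟨hJI, f, hf⟩⟩
  have h := hft t ht
  exact (h.isSolutionIn.congr h.isOpen (hagree _ _ h (hJtI t ht)).symm) t (htJt t ht)

theorem exists_isSolutionIn_of_forall_tendsto (hH : IsOpen H) (hF : LocallyLipschitzOn H F)
    (hI : IsOpen I) (hIc : IsPreconnected I) (ht₀ : t₀ ∈ I) (hx : x ∈ H)
    (hlim : ∀ J f, IsIVPSolution F H t₀ x J f → J ⊆ I → ∀ T ∈ I ∩ closure J,
      ∃ y ∈ H, Tendsto f (𝓝[J] T) (𝓝 y)) :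
    ∃ f, IsSolutionIn F H f I ∧ f t₀ = x := by
  obtain ⟨R, v, hv, hRI, hmax⟩ := exists_maximal_isIVPSolution hH hF hI hIc ht₀ hx
  have hIR : I ⊆ R := hIc.subset_of_closure_inter_subset hv.isOpen ⟨t₀, ht₀, hv.mem⟩
    fun T ⟨hTR, hTI⟩ ↦ by
      obtain ⟨y, hy, hvy⟩ := hlim R v hv hRI T ⟨hTI, hTR⟩
      obtain ⟨J, g, hg, hJI, hTJ⟩ := hv.exists_mem_of_tendsto hH hF hI hIc hRI hTI hTR hy hvy
      exact hmax J g hg hJI hTJ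
  exact ⟨v, hv.isSolutionIn.mono hIR, hv.apply_eq⟩

end

theorem stmt_0_general
    {X : Type*} [NormedAddCommGroup X] [NormedSpace ℝ X] [CompleteSpace X]
    (H : Set X) (hHopen : IsOpen H)
    (F G : X → X)
    (α k : ℝ) (hk : 0 < k)
    (hFG : ∀ x ∈ H, ‖F x - G x‖ ≤ α)
    (hGlip : LipschitzOnWith (Real.toNNReal k) G H)
    (hFloclip : ∀ x ∈ H, ∃ (K : NNReal) (t : Set X), t ∈ nhdsWithin x H ∧ LipschitzOnWith K F t)
    (μ : ℝ)
    (φ : ℝ → ℝ) (hφ : ∀ ξ : ℝ, 0 ≤ ξ → φ ξ = μ * Real.exp (ξ * k) + α / k * (Real.exp (ξ * k) - 1))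
    (x₀ : X) (t₀ b : ℝ) (hb : 0 < b)
    (u : ℝ → X)
    (humem : ∀ t ∈ Ioo (t₀ - b) (t₀ + b), u t ∈ H)
    (hu : ∀ t ∈ Ioo (t₀ - b) (t₀ + b), HasDerivAt u (G (u t)) t)
    (hu₀ : u t₀ = x₀)
    (hball : ∀ t ∈ Ioo (t₀ - b) (t₀ + b), closedBall (u t) (φ |t - t₀|) ⊆ H) :
    ∀ xt ∈ H, ‖xt - x₀‖ ≤ μ →
      ∃ v : ℝ → X,
        ((∀ t ∈ Ioo (t₀ - b) (t₀ + b), v t ∈ H ∧ HasDerivAt v (F (v t)) t) ∧ v t₀ = xt) ∧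
        (∀ w : ℝ → X,
          ((∀ t ∈ Ioo (t₀ - b) (t₀ + b), w t ∈ H ∧ HasDerivAt w (F (w t)) t) ∧ w t₀ = xt) →
          EqOn v w (Ioo (t₀ - b) (t₀ + b))) ∧
        (∀ t ∈ Ioo (t₀ - b) (t₀ + b), ‖u t - v t‖ ≤ φ |t - t₀|) := by
  intro xt hxt hxtμ
  have ht₀ : t₀ ∈ Ioo (t₀ - b) (t₀ + b) := ⟨by linarith, by linarith⟩
  have hF : LocallyLipschitzOn H F := fun x hx ↦ hFloclip x hx
  have hu' : IsSolutionIn G H u (Ioo (t₀ - b) (t₀ + b)) := fun t ht ↦ ⟨humem t ht, hu t ht⟩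
  set ρ := fun t ↦ gronwallBound μ k.toNNReal α |t - t₀|
  have hρ : ∀ t, ρ t = φ |t - t₀| := fun t ↦ by
    dsimp only [ρ]
    rw [Real.coe_toNNReal k hk.le, gronwallBound_of_K_ne_0 hk.ne', hφ _ (abs_nonneg _),
      mul_comm |t - t₀|]
  have hρc : Continuous ρ :=
    (continuous_gronwallBound _ _ _).comp (continuous_abs.comp (continuous_sub_right t₀))
  have hcomp : ∀ J v, IsIVPSolution F H t₀ xt J v → J ⊆ Ioo (t₀ - b) (t₀ + b) →
      ∀ t ∈ J, ‖u t - v t‖ ≤ ρ t := fun J v hv hJ t ht ↦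
    (hu'.mono hJ).norm_sub_le_gronwallBound hGlip hFG
      (isPreconnected_iff_ordConnected.1 hv.isPreconnected) hv.isSolutionIn hv.mem ht
      (by rwa [hu₀, hv.apply_eq, norm_sub_rev])
  obtain ⟨v, hv, hv₀⟩ := exists_isSolutionIn_of_forall_tendsto hHopen hF isOpen_Ioo
    isPreconnected_Ioo ht₀ hxt fun J v hv hJ T hT ↦
      hu'.exists_tendsto_nhdsWithin_of_norm_sub_le hGlip hFG isOpen_Ioo hρc.continuousOn
        (fun t ht ↦ hρ t ▸ hball t ht) hv.isPreconnected hJ hv.isSolutionIn (hcomp J v hv hJ)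
        hT.1 hT.2
  refine ⟨v, ⟨hv, hv₀⟩, fun w hw ↦ ?_, fun t ht ↦ hρ t ▸ ?_⟩
  · exact hv.eqOn hHopen hF hw.1 isOpen_Ioo isPreconnected_Ioo ht₀ (hv₀.trans hw.2.symm)
  · exact hcomp _ v ⟨isOpen_Ioo, isPreconnected_Ioo, ht₀, hv, hv₀⟩ subset_rfl t ht

/-- Lemma 2.2 (Dieudonné comparison of ODE solutions). -/
theorem stmt_0
    {X : Type*} [NormedAddCommGroup X] [NormedSpace ℝ X] [CompleteSpace X]
    (H : Set X) (hHopen : IsOpen H) (hHconv : Convex ℝ H)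
    (F G : X → X) (hFcont : ContinuousOn F H) (hGcont : ContinuousOn G H)
    (α k : ℝ) (hk : 0 < k) (hα : 0 ≤ α)
    (hFG : ∀ x ∈ H, ‖F x - G x‖ ≤ α)
    (hGlip : LipschitzOnWith (Real.toNNReal k) G H)
    (hFloclip : ∀ x ∈ H, ∃ (K : NNReal) (t : Set X), t ∈ nhdsWithin x H ∧ LipschitzOnWith K F t)
    (μ : ℝ) (hμ : 0 < μ)
    (φ : ℝ → ℝ) (hφ : ∀ ξ : ℝ, 0 ≤ ξ → φ ξ = μ * Real.exp (ξ * k) + α / k * (Real.exp (ξ * k) - 1))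
    (x₀ : X) (hx₀ : x₀ ∈ H) (t₀ b : ℝ) (hb : 0 < b)
    (u : ℝ → X)
    (humem : ∀ t ∈ Ioo (t₀ - b) (t₀ + b), u t ∈ H)
    (hu : ∀ t ∈ Ioo (t₀ - b) (t₀ + b), HasDerivAt u (G (u t)) t)
    (hu₀ : u t₀ = x₀)
    (hball : ∀ t ∈ Ioo (t₀ - b) (t₀ + b), closedBall (u t) (φ |t - t₀|) ⊆ H) :
    ∀ xt ∈ H, ‖xt - x₀‖ ≤ μ →
      ∃ v : ℝ → X,
        ((∀ t ∈ Ioo (t₀ - b) (t₀ + b), v t ∈ H ∧ HasDerivAt v (F (v t)) t) ∧ v t₀ = xt) ∧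
        (∀ w : ℝ → X,
          ((∀ t ∈ Ioo (t₀ - b) (t₀ + b), w t ∈ H ∧ HasDerivAt w (F (w t)) t) ∧ w t₀ = xt) →
          EqOn v w (Ioo (t₀ - b) (t₀ + b))) ∧
        (∀ t ∈ Ioo (t₀ - b) (t₀ + b), ‖u t - v t‖ ≤ φ |t - t₀|) :=
  stmt_0_general H hHopen F G α k hk hFG hGlip hFloclip μ φ hφ x₀ t₀ b hb u humem hu hu₀ hball
end

section
/- Let U ⊆ ℝⁿ be open, f : U → ℝⁿ a C¹ local diffeomorphism such that e^{−c}‖w‖ ≤ ‖Df(v)w‖ ≤ e^{c}‖w‖ for all v ∈ U and w ∈ ℝⁿ, for some c > 0. Then for any C¹ curve α : [0, a] → ℝⁿ with image in f(U), any lift α̂ : [0, b) → U of α with f ∘ α̂ = α|_{[0,b)} satisfies: the Euclidean length of α̂ is at most e^{c} times the Euclidean length of α|_{[0,b)}. -/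
/-!
Since `Df(v)` is `e^c`-antilipschitz and `f - Df(v)` has arbitrarily small Lipschitz constant
near `v`, the map `f` is locally `K`-antilipschitz for every `K > e^c`. Along the lift this gives
`‖α̂ p - α̂ q‖ ≤ K ‖α p - α q‖` for nearby parameters; a Lebesgue number argument on each compact
subinterval `[x, y]` of `[0, b)` upgrades it to `‖α̂ x - α̂ y‖ ≤ K · Var(α, [x, y])`, and summing
over a partition gives `Var α̂ ≤ K · Var α`. Finally let `K ↓ e^c`.
-/

open Set Real Filter Topology
open scoped NNReal ENNReal

section Variation

variable {E F : Type*} [PseudoEMetricSpace E] [PseudoEMetricSpace F] {K : ℝ≥0∞}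

theorem eVariationOn_le_mul_of_edist_le {α : Type*} [LinearOrder α] {g : α → E} {h : α → F}
    {s : Set α}
    (hgh : ∀ x ∈ s, ∀ y ∈ s, x ≤ y → edist (g x) (g y) ≤ K * eVariationOn h (s ∩ Icc x y)) :
    eVariationOn g s ≤ K * eVariationOn h s := by
  refine iSup_le fun ⟨n, u, hu, us⟩ => ?_
  calc ∑ i ∈ Finset.range n, edist (g (u (i + 1))) (g (u i))
      ≤ ∑ i ∈ Finset.range n, K * eVariationOn h (s ∩ Icc (u i) (u (i + 1))) :=
        Finset.sum_le_sum fun i _ => by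
          rw [edist_comm]
          exact hgh _ (us i) _ (us (i + 1)) (hu i.le_succ)
    _ = K * eVariationOn h (s ∩ Icc (u 0) (u n)) := by
        rw [← Finset.mul_sum, eVariationOn.sum h hu fun i _ _ => us i]
    _ ≤ K * eVariationOn h s := by gcongr; exact eVariationOn.mono h inter_subset_left

variable {g : ℝ → E} {h : ℝ → F}

theorem edist_le_mul_eVariationOn_Icc_of_dist_lt {x y δ : ℝ} (hxy : x ≤ y) (hδ : 0 < δ)
    (hgh : ∀ p ∈ Icc x y, ∀ q ∈ Icc x y, dist p q < δ →
      edist (g p) (g q) ≤ K * edist (h p) (h q)) :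
    edist (g x) (g y) ≤ K * eVariationOn h (Icc x y) := by
  suffices H : ∀ N : ℕ, ∀ t ∈ Icc x y, t ≤ x + N * (δ / 2) →
      edist (g x) (g t) ≤ K * eVariationOn h (Icc x t) by
    obtain ⟨N, hN⟩ := exists_nat_ge ((y - x) / (δ / 2))
    refine H N y ⟨hxy, le_rfl⟩ ?_
    rw [div_le_iff₀ (by positivity)] at hN
    linarith
  intro N
  induction N with
  | zero =>
    rintro t ⟨hxt, -⟩ ht
    obtain rfl : t = x := le_antisymm (by simpa using ht) hxt
    simp
  | succ N ih =>
    rintro t ⟨hxt, hty⟩ ht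
    set z := max x (t - δ / 2)
    have hxz : x ≤ z := le_max_left _ _
    have hzt : z ≤ t := max_le hxt (by linarith)
    have hzt_dist : dist z t < δ := by
      rw [Real.dist_eq, abs_sub_comm, abs_of_nonneg (by linarith)]
      linarith [le_max_right x (t - δ / 2)]
    have hzN : z ≤ x + N * (δ / 2) := by
      push_cast at ht
      exact max_le (by nlinarith) (by linarith)
    calc edist (g x) (g t) ≤ edist (g x) (g z) + edist (g z) (g t) := edist_triangle _ _ _
      _ ≤ K * eVariationOn h (Icc x z) + K * eVariationOn h (Icc z t) := by
          gcongr
          · exact ih z ⟨hxz, hzt.trans hty⟩ hzN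
          · exact (hgh z ⟨hxz, hzt.trans hty⟩ t ⟨hxt, hty⟩ hzt_dist).trans
              (by gcongr; exact eVariationOn.edist_le h ⟨le_rfl, hzt⟩ ⟨hzt, le_rfl⟩)
      _ = K * eVariationOn h (Icc x t) := by
          rw [← mul_add]
          simpa only [univ_inter] using
            congrArg (K * ·) (eVariationOn.Icc_add_Icc h hxz hzt (mem_univ z))

theorem edist_le_mul_eVariationOn_Icc_of_locally {x y : ℝ} (hxy : x ≤ y)
    (hloc : ∀ u ∈ Icc x y, ∃ t ∈ 𝓝[Icc x y] u, ∀ p ∈ t, ∀ q ∈ t,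
      edist (g p) (g q) ≤ K * edist (h p) (h q)) :
    edist (g x) (g y) ≤ K * eVariationOn h (Icc x y) := by
  choose t ht hgt using hloc
  obtain ⟨V, hV, hVt⟩ := lebesgue_number_lemma_nhdsWithin' isCompact_Icc ht
  obtain ⟨δ, hδ, hδV⟩ := Metric.mem_uniformity_dist.1 hV
  refine edist_le_mul_eVariationOn_Icc_of_dist_lt hxy hδ fun p hp q hq hpq => ?_
  obtain ⟨⟨u, hu⟩, hVu⟩ := hVt p hp
  exact hgt u hu p (hVu ⟨hδV (by simpa using hδ), hp⟩) q (hVu ⟨hδV hpq, hq⟩)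

theorem eVariationOn_le_mul_of_locally {s : Set ℝ} (hs : s.OrdConnected)
    (hloc : ∀ u ∈ s, ∃ t ∈ 𝓝[s] u, ∀ p ∈ t, ∀ q ∈ t,
      edist (g p) (g q) ≤ K * edist (h p) (h q)) :
    eVariationOn g s ≤ K * eVariationOn h s := by
  refine eVariationOn_le_mul_of_edist_le fun x hx y hy hxy => ?_
  have hIcc : Icc x y ⊆ s := hs.out hx hy
  rw [inter_eq_right.2 hIcc]
  refine edist_le_mul_eVariationOn_Icc_of_locally hxy fun u hu => ?_
  obtain ⟨t, ht, hgt⟩ := hloc u (hIcc hu)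
  exact ⟨t, nhdsWithin_mono u hIcc ht, hgt⟩

end Variation

theorem HasStrictFDerivAt.exists_mem_nhds_antilipschitzWith {E F : Type*}
    [NormedAddCommGroup E] [NormedSpace ℝ E] [NormedAddCommGroup F] [NormedSpace ℝ F]
    {f : E → F} {f' : E →L[ℝ] F} {a : E} (hf : HasStrictFDerivAt f f' a) {m K : ℝ≥0}
    (hf' : AntilipschitzWith m f') (hK : m < K) :
    ∃ s ∈ 𝓝 a, AntilipschitzWith K (s.domRestrict f) := by
  rcases eq_or_ne m 0 with rfl | hm
  · have := hf'.subsingleton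
    exact ⟨univ, univ_mem, AntilipschitzWith.of_subsingleton⟩
  have hKm : K⁻¹ < m⁻¹ := by gcongr
  obtain ⟨s, hs, hfs⟩ :=
    hf.approximates_deriv_on_nhds (c := m⁻¹ - K⁻¹) (Or.inr (tsub_pos_of_lt hKm))
  refine ⟨s, hs, ?_⟩
  -- `f = f' + (f - f')` on `s`, where `f - f'` is `(m⁻¹ - K⁻¹)`-Lipschitz
  have := (hf'.domRestrict s).add_sub_lipschitzWith (g := s.domRestrict f) hfs.lipschitz_sub
    (tsub_lt_self (by positivity) (inv_pos.2 (hm.bot_lt.trans hK)))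
  rwa [tsub_tsub_cancel_of_le hKm.le, inv_inv] at this

theorem ENNReal.le_coe_mul_of_forall_lt {x y : ℝ≥0∞} {k : ℝ≥0} (hk : k ≠ 0)
    (h : ∀ K : ℝ≥0, k < K → x ≤ K * y) : x ≤ k * y :=
  ge_of_tendsto (x := 𝓝[>] k)
    (ENNReal.Tendsto.mul_const ((ENNReal.continuous_coe.tendsto k).mono_left nhdsWithin_le_nhds)
      (Or.inl (by simpa using hk)))
    (eventually_nhdsWithin_of_forall h)

theorem stmt_8_general
    {n : ℕ} (U : Set (EuclideanSpace ℝ (Fin n))) (hU : IsOpen U)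
    (f : EuclideanSpace ℝ (Fin n) → EuclideanSpace ℝ (Fin n))
    (hf : ContDiffOn ℝ 1 f U)
    (c : ℝ)
    (hDf : ∀ v ∈ U, ∀ w : EuclideanSpace ℝ (Fin n),
      exp (-c) * ‖w‖ ≤ ‖fderiv ℝ f v w‖ ∧ ‖fderiv ℝ f v w‖ ≤ exp c * ‖w‖)
    (b : ℝ)
    (α : ℝ → EuclideanSpace ℝ (Fin n))
    (αhat : ℝ → EuclideanSpace ℝ (Fin n))
    (hαhatcont : ContinuousOn αhat (Ico 0 b))
    (hαhatU : ∀ t ∈ Ico 0 b, αhat t ∈ U)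
    (hlift : ∀ t ∈ Ico 0 b, f (αhat t) = α t) :
    eVariationOn αhat (Ico 0 b) ≤ ENNReal.ofReal (exp c) * eVariationOn α (Ico 0 b) := by
  refine ENNReal.le_coe_mul_of_forall_lt (by simp [exp_pos]) fun K hK => ?_
  refine eVariationOn_le_mul_of_locally ordConnected_Ico fun u hu => ?_
  have hv : αhat u ∈ U := hαhatU u hu
  have hDfv : AntilipschitzWith (exp c).toNNReal (fderiv ℝ f (αhat u)) :=
    ContinuousLinearMap.antilipschitz_of_bound _ fun w => by
      rw [Real.coe_toNNReal _ (exp_pos c).le]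
      calc ‖w‖ = exp c * (exp (-c) * ‖w‖) := by rw [← mul_assoc, ← exp_add]; simp
        _ ≤ exp c * ‖fderiv ℝ f (αhat u) w‖ := by gcongr; exact (hDf _ hv w).1
  obtain ⟨t, ht, hft⟩ := ((hf.contDiffAt (hU.mem_nhds hv)).hasStrictFDerivAt one_ne_zero)
    |>.exists_mem_nhds_antilipschitzWith hDfv hK
  refine ⟨αhat ⁻¹' t ∩ Ico 0 b, inter_mem (hαhatcont u hu ht) self_mem_nhdsWithin,
    fun p hp q hq => ?_⟩
  rw [← hlift p hp.2, ← hlift q hq.2]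
  exact hft ⟨_, hp.1⟩ ⟨_, hq.1⟩

/-- Length control of lifts through a map with two-sided derivative bounds
(used in Lemma 2.6). Lengths of curves are measured as total (Euclidean)
variations. -/
theorem stmt_8
    {n : ℕ} (U : Set (EuclideanSpace ℝ (Fin n))) (hU : IsOpen U)
    (f : EuclideanSpace ℝ (Fin n) → EuclideanSpace ℝ (Fin n))
    (hf : ContDiffOn ℝ 1 f U)
    (c : ℝ) (hc : 0 < c)
    (hDf : ∀ v ∈ U, ∀ w : EuclideanSpace ℝ (Fin n),
      exp (-c) * ‖w‖ ≤ ‖fderiv ℝ f v w‖ ∧ ‖fderiv ℝ f v w‖ ≤ exp c * ‖w‖)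
    (a b : ℝ) (ha : 0 < a) (hb : 0 < b) (hba : b ≤ a)
    (α : ℝ → EuclideanSpace ℝ (Fin n))
    (hα : ContDiffOn ℝ 1 α (Icc 0 a))
    (hαim : ∀ t ∈ Icc 0 a, α t ∈ f '' U)
    (αhat : ℝ → EuclideanSpace ℝ (Fin n))
    (hαhatcont : ContinuousOn αhat (Ico 0 b))
    (hαhatU : ∀ t ∈ Ico 0 b, αhat t ∈ U)
    (hlift : ∀ t ∈ Ico 0 b, f (αhat t) = α t) :
    eVariationOn αhat (Ico 0 b) ≤ ENNReal.ofReal (exp c) * eVariationOn α (Ico 0 b) :=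
  stmt_8_general U hU f hf c hDf b α αhat hαhatcont hαhatU hlift
end

section
/- Let f : X → Y be a surjective local homeomorphism between compact Hausdorff spaces. Then f is a covering map. -/
theorem stmt_9_general
    {X Y : Type*} [TopologicalSpace X] [TopologicalSpace Y]
    [CompactSpace X] [T2Space X] [T2Space Y]
    (f : X → Y)
    (hloc : IsLocalHomeomorph f) :
    IsCoveringMap f :=
  isLocalHomeomorph_iff_isCoveringMap.mp hloc

/-- A surjective local homeomorphism between compact Hausdorff spaces is a
covering map. -/
theorem stmt_9
    {X Y : Type*} [TopologicalSpace X] [TopologicalSpace Y]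
    [CompactSpace X] [T2Space X] [CompactSpace Y] [T2Space Y]
    (f : X → Y) (hsurj : Function.Surjective f)
    (hloc : IsLocalHomeomorph f) :
    IsCoveringMap f :=
  stmt_9_general f hloc
end

section
/- Let B̄ be the closed Euclidean ball of radius r̃ centered at 0 in ℝⁿ, and let f : B̄ → f(B̄) ⊆ ℝⁿ be a covering map with f(0) = p. Suppose v₀ ≠ v₁ in the open ball B(0, r₅) (with r₅ < r̃) satisfy f(v₀) = f(v₁) = q, the curves γᵢ(t) = f(t vᵢ) (t ∈ [0,1]) lie in a set D ⊆ f(B̄), and the straight-line homotopy γ_s(t) = s γ₁(t) + (1 − s) γ₀(t) has image in D ⊆ f(B̄). Then lifting the homotopy with fixed endpoints yields a contradiction: hence f is injective on B(0, r₅). -/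
/-!
The radial segments `t ↦ t • v₀` and `t ↦ t • v₁` in the ball lift the paths `t ↦ f (t • vᵢ)`,
which run from `f 0` to `q`. The straight-line homotopy between these paths fixes both endpoints
and stays in `f '' B̄`, so by the homotopy lifting property of the covering map the two lifts,
which start together at `0`, also end together: `v₀ = v₁`.
-/

open Set Metric unitInterval

theorem ContinuousMap.homotopicRel_of_segment_subset {X E : Type*} [TopologicalSpace X]
    [AddCommGroup E] [TopologicalSpace E] [ContinuousAdd E] [Module ℝ E] [ContinuousSMul ℝ E]
    {S : Set E} (f g : C(X, S)) {K : Set X} (hK : ∀ x ∈ K, f x = g x)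
    (hseg : ∀ x, segment ℝ (f x : E) (g x) ⊆ S) :
    f.HomotopicRel g K :=
  ⟨{ toFun z := ⟨AffineMap.lineMap (f z.2 : E) (g z.2) (z.1 : ℝ),
        hseg z.2 (lineMap_mem_segment ℝ _ _ ⟨z.1.2.1, z.1.2.2⟩)⟩
     continuous_toFun := by
       refine Continuous.subtype_mk ?_ _
       simp only [AffineMap.lineMap_apply_module]
       fun_prop
     map_zero_left x := by simp
     map_one_left x := by simp
     prop' s x hx := by simp [hK x hx] }⟩

theorem IsCoveringMap.apply_one_eq_of_homotopicRel_comp {E X : Type*} [TopologicalSpace E]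
    [TopologicalSpace X] {p : E → X} (cov : IsCoveringMap p) {Γ₀ Γ₁ : C(I, E)}
    (h₀ : Γ₀ 0 = Γ₁ 0)
    (h : (ContinuousMap.comp ⟨p, cov.continuous⟩ Γ₀).HomotopicRel
      (.comp ⟨p, cov.continuous⟩ Γ₁) {0, 1}) :
    Γ₀ 1 = Γ₁ 1 :=
  ((cov.homotopicRel_iff_comp ⟨0, .inl rfl, h₀⟩).mpr h).some.fst_eq_snd (.inr rfl)

def Metric.closedBall.radialPath {E : Type*} [SeminormedAddCommGroup E] [NormedSpace ℝ E]
    {r : ℝ} (v : E) (hv : v ∈ closedBall (0 : E) r) : C(I, closedBall (0 : E) r) where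
  toFun t := ⟨(t : ℝ) • v, (convex_closedBall 0 r).smul_mem_of_zero_mem
    (mem_closedBall_self (nonempty_closedBall.1 ⟨v, hv⟩)) hv ⟨t.2.1, t.2.2⟩⟩
  continuous_toFun := by fun_prop

theorem stmt_10_general
    {n : ℕ} (rtilde r₅ : ℝ) (hr : r₅ < rtilde)
    (f : EuclideanSpace ℝ (Fin n) → EuclideanSpace ℝ (Fin n))
    (hcov : IsCoveringMap
      (fun x : closedBall (0 : EuclideanSpace ℝ (Fin n)) rtilde =>
        (⟨f x, mem_image_of_mem f x.2⟩ : f '' closedBall (0 : EuclideanSpace ℝ (Fin n)) rtilde)))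
    (v₀ v₁ : EuclideanSpace ℝ (Fin n))
    (hv₀ : v₀ ∈ ball (0 : EuclideanSpace ℝ (Fin n)) r₅)
    (hv₁ : v₁ ∈ ball (0 : EuclideanSpace ℝ (Fin n)) r₅)
    (hne : v₀ ≠ v₁)
    (q : EuclideanSpace ℝ (Fin n)) (hq₀ : f v₀ = q) (hq₁ : f v₁ = q)
    (D : Set (EuclideanSpace ℝ (Fin n)))
    (hD : D ⊆ f '' closedBall (0 : EuclideanSpace ℝ (Fin n)) rtilde)
    (hhomotopy : ∀ s ∈ Icc (0:ℝ) 1, ∀ t ∈ Icc (0:ℝ) 1,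
      s • f (t • v₁) + (1 - s) • f (t • v₀) ∈ D) :
    False := by
  have hball : ball (0 : EuclideanSpace ℝ (Fin n)) r₅ ⊆ closedBall 0 rtilde :=
    ball_subset_closedBall.trans (closedBall_subset_closedBall hr.le)
  set Γ₀ := closedBall.radialPath v₀ (hball hv₀)
  set Γ₁ := closedBall.radialPath v₁ (hball hv₁)
  have hends : ∀ t ∈ ({0, 1} : Set I), f (Γ₀ t) = f (Γ₁ t) := by
    rintro t (rfl | rfl)
    · simp [Γ₀, Γ₁, closedBall.radialPath]
    · simp [Γ₀, Γ₁, closedBall.radialPath, hq₀, hq₁]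
  have hseg : ∀ t : I, segment ℝ (f (Γ₀ t)) (f (Γ₁ t)) ⊆ f '' closedBall 0 rtilde := by
    intro t
    rw [segment_eq_image]
    rintro - ⟨s, hs, rfl⟩
    dsimp only
    rw [add_comm (_ • _)]
    exact hD (hhomotopy s hs t t.2)
  have hlift : Γ₀ 1 = Γ₁ 1 := hcov.apply_one_eq_of_homotopicRel_comp
    (by simp [Γ₀, Γ₁, closedBall.radialPath])
    (ContinuousMap.homotopicRel_of_segment_subset _ _ (fun t ht ↦ Subtype.ext (hends t ht)) hseg)
  exact hne (by simpa [Γ₀, Γ₁, closedBall.radialPath] using hlift)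

/-- The homotopy-lifting injectivity argument of Lemma 2.7: a covering map from
a closed ball cannot identify two radial segments whose straight-line homotopy
stays in the image; the hypotheses lead to a contradiction. -/
theorem stmt_10
    {n : ℕ} (rtilde r₅ : ℝ) (hr₅ : 0 < r₅) (hr : r₅ < rtilde)
    (f : EuclideanSpace ℝ (Fin n) → EuclideanSpace ℝ (Fin n))
    (p : EuclideanSpace ℝ (Fin n)) (hfp : f 0 = p)
    (hcov : IsCoveringMap
      (fun x : closedBall (0 : EuclideanSpace ℝ (Fin n)) rtilde =>
        (⟨f x, mem_image_of_mem f x.2⟩ : f '' closedBall (0 : EuclideanSpace ℝ (Fin n)) rtilde)))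
    (v₀ v₁ : EuclideanSpace ℝ (Fin n))
    (hv₀ : v₀ ∈ ball (0 : EuclideanSpace ℝ (Fin n)) r₅)
    (hv₁ : v₁ ∈ ball (0 : EuclideanSpace ℝ (Fin n)) r₅)
    (hne : v₀ ≠ v₁)
    (q : EuclideanSpace ℝ (Fin n)) (hq₀ : f v₀ = q) (hq₁ : f v₁ = q)
    (D : Set (EuclideanSpace ℝ (Fin n)))
    (hD : D ⊆ f '' closedBall (0 : EuclideanSpace ℝ (Fin n)) rtilde)
    (hγ₀ : ∀ t ∈ Icc (0:ℝ) 1, f (t • v₀) ∈ D)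
    (hγ₁ : ∀ t ∈ Icc (0:ℝ) 1, f (t • v₁) ∈ D)
    (hhomotopy : ∀ s ∈ Icc (0:ℝ) 1, ∀ t ∈ Icc (0:ℝ) 1,
      s • f (t • v₁) + (1 - s) • f (t • v₀) ∈ D) :
    False :=
  stmt_10_general rtilde r₅ hr f hcov v₀ v₁ hv₀ hv₁ hne q hq₀ hq₁ D hD hhomotopy
end

section
/- Let f : U → ℝⁿ be a local homeomorphism on the closed ball B̄(0, r̃) ⊆ ℝⁿ mapping 0 to p, which on the open ball B(0, r₃) ⊇ B̄(0, r̃) is a C¹ local diffeomorphism satisfying e^{−c}‖w‖ ≤ ‖Df(v)w‖ ≤ e^{c}‖w‖. If r₄ < e^{−c} r₃ and r̃ = e^{c} r₄, then the Euclidean ball B(p, r₄) is contained in f(B̄(0, r̃)). -/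
/-!
Lift the segment `t ↦ p + t • (q - p)`, `t ∈ [0, 1]`, through `f` starting at `0`. Since
`‖(Df)⁻¹‖ ≤ e^c`, the lift moves at speed at most `e^c ‖q - p‖`, so it stays in the closed ball of
radius `e^c ‖q - p‖ < r̃` on which `f` is a local homeomorphism. The set of times up to which the
lift exists is closed by compactness of that ball and open to the right because local inverses of
`f` extend the lift; hence it is all of `[0, 1]`, and the endpoint of the lift is a preimage of `q`.
-/

open Set Metric Real
open Filter Topology

theorem ContinuousLinearMap.exists_equiv_norm_symm_le_of_bounded_below
    {E : Type*} [NormedAddCommGroup E] [NormedSpace ℝ E] [FiniteDimensional ℝ E]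
    {A : E →L[ℝ] E} {m : ℝ} (hm : 0 < m) (hA : ∀ w, m * ‖w‖ ≤ ‖A w‖) :
    ∃ B : E ≃L[ℝ] E, (B : E →L[ℝ] E) = A ∧ ∀ z, ‖B.symm z‖ ≤ m⁻¹ * ‖z‖ := by
  have hinj : Function.Injective A := fun a b hab => by
    have := hA (a - b)
    rw [map_sub, hab, sub_self, norm_zero] at this
    exact sub_eq_zero.mp (norm_le_zero_iff.mp (nonpos_of_mul_nonpos_right this hm))
  set B := (LinearEquiv.ofInjectiveEndo (A : E →ₗ[ℝ] E) hinj).toContinuousLinearEquiv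
  have hB : (B : E →L[ℝ] E) = A := rfl
  refine ⟨B, hB, fun z => ?_⟩
  rw [le_inv_mul_iff₀ hm]
  simpa [← hB] using hA (B.symm z)

theorem isClosed_setOf_exists_mem_closedBall_inter_Icc {E F : Type*} [MetricSpace E]
    [ProperSpace E] [TopologicalSpace F] [T2Space F] {f : E → F} {x₀ : E} {L : ℝ}
    {γ : ℝ → F} (hf : ContinuousOn f (closedBall x₀ L)) (hγ : Continuous γ) (hL : 0 ≤ L) :
    IsClosed ({t | ∃ x ∈ closedBall x₀ (t * L), f x = γ t} ∩ Icc 0 1) := by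
  have hcone : IsCompact ((Icc 0 1 ×ˢ closedBall x₀ L) ∩ {p | dist p.2 x₀ ≤ p.1 * L}) :=
    (isCompact_Icc.prod (isCompact_closedBall x₀ L)).inter_right
      (isClosed_le (by fun_prop) (by fun_prop))
  set K := (Icc 0 1 ×ˢ closedBall x₀ L) ∩ {p | dist p.2 x₀ ≤ p.1 * L} ∩
    (fun p : ℝ × E => (f p.2, γ p.1)) ⁻¹' diagonal F
  have hK : IsCompact K := hcone.of_isClosed_subset
    (ContinuousOn.preimage_isClosed_of_isClosed
      ((hf.comp continuousOn_snd fun p hp => hp.1.2).prodMk (by fun_prop))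
      hcone.isClosed isClosed_diagonal) inter_subset_left
  convert (hK.image continuous_fst).isClosed using 1
  ext t
  simp only [K, mem_inter_iff, mem_image, mem_preimage, mem_prod, mem_diagonal_iff,
    mem_closedBall, Prod.exists, exists_and_right, exists_eq_right]
  constructor
  · rintro ⟨⟨x, hx, hfx⟩, ht⟩
    exact ⟨x, ⟨⟨⟨ht, hx.trans (by nlinarith [ht.2])⟩, hx⟩, hfx⟩⟩
  · rintro ⟨x, ⟨⟨⟨ht, -⟩, hx⟩, hfx⟩⟩
    exact ⟨⟨x, hx, hfx⟩, ht⟩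

section SegmentLift

variable {E F : Type*} [NormedAddCommGroup E] [NormedSpace ℝ E]
  [NormedAddCommGroup F] [NormedSpace ℝ F]

theorem IsLocalHomeomorphOn.eventually_exists_lift_segment {f : E → F} {x₀ : E} {r C : ℝ}
    (hloc : IsLocalHomeomorphOn f (ball x₀ r))
    (hderiv : ∀ x ∈ ball x₀ r, ∃ A : E ≃L[ℝ] F,
      HasFDerivAt f (A : E →L[ℝ] F) x ∧ ∀ z, ‖A.symm z‖ ≤ C * ‖z‖)
    {a v : F} {T : ℝ} {x : E} (hx : x ∈ ball x₀ r) (hfx : f x = a + T • v) :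
    ∀ᶠ t in 𝓝 T, ∃ x', ‖x' - x‖ ≤ C * ‖v‖ * |t - T| ∧ f x' = a + t • v := by
  obtain ⟨e, hxe, rfl⟩ := hloc x hx
  set γ : ℝ → F := fun t => a + t • v
  have hW : IsOpen (γ ⁻¹' (e.target ∩ e.symm ⁻¹' ball x₀ r)) :=
    (e.isOpen_inter_preimage_symm isOpen_ball).preimage (by fun_prop)
  have hTW : T ∈ γ ⁻¹' (e.target ∩ e.symm ⁻¹' ball x₀ r) := by
    simp only [mem_preimage, mem_inter_iff, γ, ← hfx, e.map_source hxe, e.left_inv hxe, hx,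
      and_self]
  obtain ⟨ε, hε, hball⟩ := Metric.isOpen_iff.mp hW T hTW
  have hlift : ∀ t ∈ ball T ε,
      ∃ D, HasDerivAt (e.symm ∘ γ) D t ∧ ‖D‖ ≤ C * ‖v‖ := fun t ht => by
    obtain ⟨htarget, hsource⟩ := hball ht
    obtain ⟨A, hA, hAsymm⟩ := hderiv _ hsource
    have hγ : HasDerivAt γ v t := by
      simpa only [id, one_smul] using ((hasDerivAt_id t).smul_const v).const_add a
    exact ⟨A.symm v, (e.hasFDerivAt_symm htarget hA).comp_hasDerivAt t hγ, hAsymm v⟩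
  choose! D hD hDC using hlift
  have hLip : ∀ t ∈ ball T ε, ‖e.symm (γ t) - x‖ ≤ C * ‖v‖ * |t - T| := fun t ht => by
    have := (convex_ball T ε).norm_image_sub_le_of_norm_hasDerivWithin_le
      (fun s hs => (hD s hs).hasDerivWithinAt) hDC (mem_ball_self hε) ht
    simpa [γ, ← hfx, e.left_inv hxe, Real.norm_eq_abs] using this
  filter_upwards [ball_mem_nhds T hε] with t ht
  exact ⟨e.symm (γ t), hLip t ht, e.right_inv (hball ht).1⟩

theorem IsLocalHomeomorphOn.mem_image_closedBall_of_norm_symm_fderiv_le [ProperSpace E]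
    {f : E → F} {x₀ : E} {r C : ℝ} (hC : 0 ≤ C) (hloc : IsLocalHomeomorphOn f (ball x₀ r))
    (hderiv : ∀ x ∈ ball x₀ r, ∃ A : E ≃L[ℝ] F,
      HasFDerivAt f (A : E →L[ℝ] F) x ∧ ∀ z, ‖A.symm z‖ ≤ C * ‖z‖)
    {y : F} (hy : C * ‖y - f x₀‖ < r) :
    y ∈ f '' closedBall x₀ (C * ‖y - f x₀‖) := by
  set L := C * ‖y - f x₀‖
  have hL : 0 ≤ L := by positivity
  set S := {t : ℝ | ∃ x ∈ closedBall x₀ (t * L), f x = f x₀ + t • (y - f x₀)}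
  have hS : Icc 0 1 ⊆ S := by
    refine IsClosed.Icc_subset_of_forall_mem_nhdsWithin
      (isClosed_setOf_exists_mem_closedBall_inter_Icc
        (hloc.continuousOn.mono (closedBall_subset_ball hy)) (by fun_prop) hL)
      ⟨x₀, by simp, by simp⟩ ?_
    rintro T ⟨⟨x, hx, hfx⟩, hT⟩
    have hxr : x ∈ ball x₀ r :=
      closedBall_subset_ball ((mul_le_of_le_one_left hL hT.2.le).trans_lt hy) hx
    filter_upwards [nhdsWithin_le_nhds (hloc.eventually_exists_lift_segment hderiv hxr hfx),
      self_mem_nhdsWithin] with t ⟨x', hx', hfx'⟩ (hTt : T < t)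
    refine ⟨x', ?_, hfx'⟩
    rw [mem_closedBall] at hx ⊢
    rw [abs_of_pos (sub_pos.2 hTt), ← dist_eq_norm] at hx'
    calc dist x' x₀ ≤ dist x' x + dist x x₀ := dist_triangle _ _ _
      _ ≤ L * (t - T) + T * L := add_le_add hx' hx
      _ = t * L := by ring
  obtain ⟨x, hx, hfx⟩ := hS ⟨zero_le_one, le_rfl⟩
  exact ⟨x, by simpa using hx, by simpa using hfx⟩

end SegmentLift

theorem stmt_13_general
    {n : ℕ} (c r₃ r₄ rtilde : ℝ)
    (hrt : rtilde = exp c * r₄)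
    (f : EuclideanSpace ℝ (Fin n) → EuclideanSpace ℝ (Fin n))
    (p : EuclideanSpace ℝ (Fin n)) (hf0 : f 0 = p)
    (hloc : IsLocalHomeomorphOn f (closedBall (0 : EuclideanSpace ℝ (Fin n)) rtilde))
    (hsub : closedBall (0 : EuclideanSpace ℝ (Fin n)) rtilde ⊆
      ball (0 : EuclideanSpace ℝ (Fin n)) r₃)
    (hC1 : ContDiffOn ℝ 1 f (ball (0 : EuclideanSpace ℝ (Fin n)) r₃))
    (hDf : ∀ v ∈ ball (0 : EuclideanSpace ℝ (Fin n)) r₃,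
      ∀ w : EuclideanSpace ℝ (Fin n),
        exp (-c) * ‖w‖ ≤ ‖fderiv ℝ f v w‖ ∧ ‖fderiv ℝ f v w‖ ≤ exp c * ‖w‖) :
    ball p r₄ ⊆ f '' closedBall (0 : EuclideanSpace ℝ (Fin n)) rtilde := by
  intro q hq
  have hq' : exp c * ‖q - f 0‖ < rtilde := by
    rw [hrt, hf0, ← dist_eq_norm]
    exact mul_lt_mul_of_pos_left hq (exp_pos c)
  have hderiv : ∀ x ∈ ball 0 rtilde,
      ∃ A : EuclideanSpace ℝ (Fin n) ≃L[ℝ] EuclideanSpace ℝ (Fin n),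
        HasFDerivAt f (A : _ →L[ℝ] _) x ∧ ∀ z, ‖A.symm z‖ ≤ exp c * ‖z‖ := by
    intro x hx
    have hx₃ : x ∈ ball 0 r₃ := hsub (ball_subset_closedBall hx)
    obtain ⟨A, hA, hAsymm⟩ := (fderiv ℝ f x).exists_equiv_norm_symm_le_of_bounded_below
      (exp_pos (-c)) fun w => (hDf x hx₃ w).1
    refine ⟨A, hA ▸ ?_, by simpa [← exp_neg] using hAsymm⟩
    exact ((hC1.differentiableOn one_ne_zero).differentiableAt
      (isOpen_ball.mem_nhds hx₃)).hasFDerivAt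
  obtain ⟨x, hx, hfx⟩ :=
    (hloc.mono ball_subset_closedBall).mem_image_closedBall_of_norm_symm_fderiv_le
      (exp_pos c).le hderiv hq'
  exact ⟨x, closedBall_subset_closedBall hq'.le hx, hfx⟩

/-- Second inclusion of Lemma 2.6: the ball B(p, r₄) is contained in the image
of the closed ball of radius r̃ = e^c r₄. -/
theorem stmt_13
    {n : ℕ} (c r₃ r₄ rtilde : ℝ) (hc : 0 < c) (hr₃ : 0 < r₃) (hr₄ : 0 < r₄)
    (hr₄r₃ : r₄ < exp (-c) * r₃) (hrt : rtilde = exp c * r₄)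
    (f : EuclideanSpace ℝ (Fin n) → EuclideanSpace ℝ (Fin n))
    (p : EuclideanSpace ℝ (Fin n)) (hf0 : f 0 = p)
    (hloc : IsLocalHomeomorphOn f (closedBall (0 : EuclideanSpace ℝ (Fin n)) rtilde))
    (hsub : closedBall (0 : EuclideanSpace ℝ (Fin n)) rtilde ⊆
      ball (0 : EuclideanSpace ℝ (Fin n)) r₃)
    (hC1 : ContDiffOn ℝ 1 f (ball (0 : EuclideanSpace ℝ (Fin n)) r₃))
    (hDf : ∀ v ∈ ball (0 : EuclideanSpace ℝ (Fin n)) r₃,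
      ∀ w : EuclideanSpace ℝ (Fin n),
        exp (-c) * ‖w‖ ≤ ‖fderiv ℝ f v w‖ ∧ ‖fderiv ℝ f v w‖ ≤ exp c * ‖w‖) :
    ball p r₄ ⊆ f '' closedBall (0 : EuclideanSpace ℝ (Fin n)) rtilde :=
  stmt_13_general c r₃ r₄ rtilde hrt f p hf0 hloc hsub hC1 hDf
end

section
/- Let U ⊆ ℝⁿ be an open neighborhood of 0, f : U → ℝⁿ a homeomorphism onto an open set D = f(U), with f(tv) defined and the curves t ↦ f(tv) (t ∈ [0,1]) contained in D for every v ∈ U (i.e., every radial segment's image curve stays in D). Suppose moreover that for each v ∈ U the preimage under f of the compact image curve f([0,1]·v) is compact in U. Then U is star-shaped with respect to 0. -/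
open Set

/-- Abstract form of the star-shapedness argument in Theorem 4.2. -/
theorem stmt_19
    {n : ℕ} (U : Set (EuclideanSpace ℝ (Fin n))) (hU : IsOpen U)
    (h0 : (0 : EuclideanSpace ℝ (Fin n)) ∈ U)
    (f : EuclideanSpace ℝ (Fin n) → EuclideanSpace ℝ (Fin n))
    (D : Set (EuclideanSpace ℝ (Fin n))) (hD : D = f '' U) (hDopen : IsOpen D)
    (hcont : ContinuousOn f U) (hinj : InjOn f U)
    (hinvcont : ∀ g : EuclideanSpace ℝ (Fin n) → EuclideanSpace ℝ (Fin n),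
      (∀ x ∈ U, g (f x) = x) → ContinuousOn g D)
    (hray : ∀ v ∈ U, ∀ t ∈ Icc (0:ℝ) 1, f (t • v) ∈ D)
    (hcompact : ∀ v ∈ U,
      IsCompact (U ∩ f ⁻¹' (f '' ((fun t : ℝ => t • v) '' Icc (0:ℝ) 1)))) :
    StarConvex ℝ (0 : EuclideanSpace ℝ (Fin n)) U := by
  -- Main claim: for every v ∈ U and t ∈ [0,1], t • v ∈ U.
  have main : ∀ v ∈ U, ∀ t ∈ Icc (0:ℝ) 1, t • v ∈ U := by
    intro v hv
    set K := U ∩ f ⁻¹' (f '' ((fun t : ℝ => t • v) '' Icc (0:ℝ) 1)) with hK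
    have hKcomp : IsCompact K := hcompact v hv
    set A : Set ℝ := {t : ℝ | t ∈ Icc (0:ℝ) 1 ∧ ∀ s ∈ Icc (0:ℝ) t, s • v ∈ U}
      with hA
    have h0A : (0:ℝ) ∈ A := by
      refine ⟨⟨le_refl 0, zero_le_one⟩, ?_⟩
      intro s hs
      have : s = 0 := le_antisymm hs.2 hs.1
      simpa [this] using h0
    have hAne : A.Nonempty := ⟨0, h0A⟩
    have hAbdd : BddAbove A := ⟨1, fun t ht => ht.1.2⟩
    set T := sSup A with hT
    have hT0 : 0 ≤ T := le_csSup hAbdd h0A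
    have hT1 : T ≤ 1 := csSup_le hAne fun t ht => ht.1.2
    -- every element of A maps into K
    have hAK : ∀ t ∈ A, t • v ∈ K := by
      intro t ht
      refine ⟨ht.2 t ⟨ht.1.1, le_refl t⟩, ?_⟩
      exact mem_image_of_mem f (mem_image_of_mem _ ht.1)
    -- T • v ∈ K
    have hTK : T • v ∈ K := by
      have hcl : T ∈ closure A := csSup_mem_closure hAne hAbdd
      have hcont' : Continuous fun t : ℝ => t • v :=
        continuous_id.smul continuous_const
      have : (fun t : ℝ => t • v) T ∈ closure ((fun t : ℝ => t • v) '' A) :=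
        (image_closure_subset_closure_image hcont') (mem_image_of_mem _ hcl)
      have hsub : (fun t : ℝ => t • v) '' A ⊆ K := by
        rintro x ⟨t, ht, rfl⟩; exact hAK t ht
      exact hKcomp.isClosed.closure_subset ((closure_mono hsub) this)
    have hTU : T • v ∈ U := hTK.1
    -- T ∈ A
    have hTA : T ∈ A := by
      refine ⟨⟨hT0, hT1⟩, ?_⟩
      intro s hs
      rcases lt_or_eq_of_le hs.2 with h | h
      · obtain ⟨t, htA, hst⟩ := exists_lt_of_lt_csSup hAne h
        exact htA.2 s ⟨hs.1, le_of_lt hst⟩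
      · simpa [h] using hTU
    -- T = 1
    have hTeq : T = 1 := by
      by_contra hne
      have hTlt : T < 1 := lt_of_le_of_ne hT1 hne
      have hcont' : Continuous fun t : ℝ => t • v :=
        continuous_id.smul continuous_const
      have : (fun t : ℝ => t • v) ⁻¹' U ∈ nhds T :=
        (hU.preimage hcont').mem_nhds hTU
      obtain ⟨ε, hε, hball⟩ := Metric.mem_nhds_iff.1 this
      set T' := min 1 (T + ε / 2) with hT'
      have hTT' : T < T' := lt_min hTlt (by linarith)
      have hT'A : T' ∈ A := by
        refine ⟨⟨le_trans hT0 hTT'.le, min_le_left _ _⟩, ?_⟩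
        intro s hs
        rcases le_or_gt s T with h | h
        · exact hTA.2 s ⟨hs.1, h⟩
        · apply hball
          have hsT' : s ≤ T + ε / 2 := le_trans hs.2 (min_le_right _ _)
          have : |s - T| < ε := by
            rw [abs_lt]; constructor <;> [linarith; linarith]
          simpa [Metric.mem_ball, Real.dist_eq] using this
      exact absurd (le_csSup hAbdd hT'A) (not_le.2 hTT')
    intro t ht
    have h1A : (1:ℝ) ∈ A := hTeq ▸ hTA
    exact h1A.2 t ht
  intro v hv a b ha hb hab
  have hb1 : b ≤ 1 := by linarith
  have := main v hv b ⟨hb, hb1⟩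
  simpa using this
end
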